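/- arXiv:nlin/0008038 — 2 statements merged into one kernel-verified Lean document; each statement's English description precedes it below -/
import Mathlib

section
/- Let P_α, P_β, T, S be positive integers and d_α, d_β integers. Suppose T divides P_α and T divides P_β, and suppose S divides the integer lcm(P_α,P_β)·(d_α/P_α − d_β/P_β) (which is an integer). Then the rational number P_α·P_β·(d_α/P_α − d_β/P_β)/(T·S) is an integer. -/
theorem upper_bound_is_integer
    (Pα Pβ T S : ℕ) (hPα : 0 < Pα) (hPβ : 0 < Pβ) (hT : 0 < T) (hS : 0 < S)
    (dα dβ : ℤ)
    (hTα : T ∣ Pα) (hTβ : T ∣ Pβ)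
    (k : ℤ)
    (hk : (Nat.lcm Pα Pβ : ℚ) * ((dα : ℚ) / (Pα : ℚ) - (dβ : ℚ) / (Pβ : ℚ)) = (k : ℚ))
    (hSk : (S : ℤ) ∣ k) :
    ∃ m : ℤ,
      (Pα : ℚ) * (Pβ : ℚ) * ((dα : ℚ) / (Pα : ℚ) - (dβ : ℚ) / (Pβ : ℚ)) / ((T : ℚ) * (S : ℚ))
        = (m : ℚ) := by
  obtain ⟨k', hk'⟩ := hSk
  obtain ⟨g', hg'⟩ := Nat.dvd_gcd hTα hTβ
  refine ⟨(g' : ℤ) * k', ?_⟩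
  have hPP : (Pα : ℚ) * (Pβ : ℚ) = (Nat.gcd Pα Pβ : ℚ) * (Nat.lcm Pα Pβ : ℚ) := by
    exact_mod_cast (Nat.gcd_mul_lcm Pα Pβ).symm
  have h1 : (Pα : ℚ) * (Pβ : ℚ) * ((dα : ℚ) / (Pα : ℚ) - (dβ : ℚ) / (Pβ : ℚ))
      = (Nat.gcd Pα Pβ : ℚ) * k := by rw [hPP, mul_assoc, hk]
  have hgq : (Nat.gcd Pα Pβ : ℚ) = (T : ℚ) * (g' : ℚ) := by exact_mod_cast hg'
  have hkq : (k : ℚ) = (S : ℚ) * (k' : ℚ) := by exact_mod_cast hk'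
  rw [h1, hgq, hkq]
  have hT0 : (T : ℚ) ≠ 0 := Nat.cast_ne_zero.mpr hT.ne'
  have hS0 : (S : ℚ) ≠ 0 := Nat.cast_ne_zero.mpr hS.ne'
  field_simp
  norm_cast
end

section
/- Let n ≥ 1 and consider a deterministic finite automaton with state set partitioned into n copies of a set Q of size 2^{2r}, where transitions go only from copy k to copy k+1 (mod n), and such that from copy k only states in copy k+1 whose labels (binary words of length 2r) end in a fixed symbol b_k are reachable. Then iterating removal of unreachable states 2r times leaves exactly n states, one in each copy, and the resulting automaton is a single cycle of length n. -/
/-- One state per copy: states are pairs of a copy index in `ZMod n` and a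
label, a binary word of length `2*r` (a function `Fin (2*r) → Bool`). -/
abbrev ComposedState (n r : ℕ) := ZMod n × (Fin (2 * r) → Bool)

/-- The deterministic transition of the composed (domain ∘ update-transducer)
machine: move to the next copy, and shift the context word left, appending the
fixed symbol `b k` determined by the current copy `k` (so that from copy `k`
only states of copy `k+1` whose label ends in `b k` are reachable). -/
def composedNext (n r : ℕ) (b : ZMod n → Bool) (q : ComposedState n r) :
    ComposedState n r :=
  (q.1 + 1,
    fun i => if h : (i : ℕ) + 1 < 2 * r then q.2 ⟨(i : ℕ) + 1, h⟩ else b q.1)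

/-- Removing the states that have no predecessor within the current state set. -/
def pruneUnreachable (n r : ℕ) (b : ZMod n → Bool)
    (A : Set (ComposedState n r)) : Set (ComposedState n r) :=
  {q ∈ A | ∃ p ∈ A, composedNext n r b p = q}

/-- The single surviving state in each copy. -/
def cycState (n r : ℕ) (b : ZMod n → Bool) (j : ZMod n) : ComposedState n r :=
  (j, fun i => b (j - ((2 * r : ℕ) : ZMod n) + ((i : ℕ) : ZMod n)))

lemma iter_apply (n r : ℕ) (b : ZMod n → Bool) (m : ℕ) (k : ZMod n)
    (w : Fin (2 * r) → Bool) :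
    (composedNext n r b)^[m] (k, w) =
      (k + (m : ZMod n),
        fun i : Fin (2*r) => if h : (i : ℕ) + m < 2 * r then w ⟨(i : ℕ) + m, h⟩
          else b (k + (((i : ℕ) + m - 2 * r : ℕ) : ZMod n))) := by
  induction m generalizing k w with
  | zero =>
      simp only [Function.iterate_zero_apply, Nat.cast_zero, add_zero]
      refine Prod.ext rfl ?_
      funext i
      dsimp only
      rw [dif_pos (by simpa using i.isLt)]
  | succ m ih =>
      rw [Function.iterate_succ_apply, composedNext, ih]
      refine Prod.ext ?_ ?_
      · show k + 1 + (m : ZMod n) = k + ((m + 1 : ℕ) : ZMod n)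
        push_cast; ring
      · funext i
        dsimp only
        by_cases h1 : (i : ℕ) + (m + 1) < 2 * r
        · have h0 : (i : ℕ) + m < 2 * r := by omega
          rw [dif_pos h0, dif_pos h1, dif_pos (show ((⟨(i:ℕ)+m, h0⟩ : Fin (2*r)) : ℕ) + 1 < 2*r by simpa using by omega)]
          rfl
        · rw [dif_neg h1]
          by_cases h0 : (i : ℕ) + m < 2 * r
          · have he : (i : ℕ) + m + 1 = 2 * r := by omega
            rw [dif_pos h0, dif_neg (show ¬ (((⟨(i:ℕ)+m, h0⟩ : Fin (2*r)) : ℕ) + 1 < 2*r) by simpa using by omega)]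
            congr 1
            have : ((i : ℕ) + (m + 1) - 2 * r : ℕ) = 0 := by omega
            rw [this]
            simp
          · rw [dif_neg h0]
            congr 1
            have : ((i : ℕ) + (m + 1) - 2 * r : ℕ) = ((i : ℕ) + m - 2 * r) + 1 := by omega
            rw [this]
            push_cast
            ring

lemma next_cycState (n r : ℕ) (b : ZMod n → Bool) (j : ZMod n) :
    composedNext n r b (cycState n r b j) = cycState n r b (j + 1) := by
  refine Prod.ext rfl ?_
  funext i
  show (if h : (i : ℕ) + 1 < 2 * r then
      b (j - ((2 * r : ℕ) : ZMod n) + (((i : ℕ) + 1 : ℕ) : ZMod n)) else b j)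
    = b (j + 1 - ((2 * r : ℕ) : ZMod n) + ((i : ℕ) : ZMod n))
  by_cases h : (i : ℕ) + 1 < 2 * r
  · rw [dif_pos h]; congr 1; push_cast; ring
  · rw [dif_neg h]
    have he : (i : ℕ) + 1 = 2 * r := by omega
    congr 1
    have h1 : (((i : ℕ) : ℕ) : ZMod n) = ((2 * r - 1 : ℕ) : ZMod n) := by
      congr 1; omega
    rw [h1, Nat.cast_sub (by omega : 1 ≤ 2 * r)]
    push_cast; ring

lemma iter_cycState (n r : ℕ) (b : ZMod n → Bool) (j : ZMod n) (t : ℕ) :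
    (composedNext n r b)^[t] (cycState n r b j) = cycState n r b (j + t) := by
  induction t with
  | zero => simp
  | succ t ih =>
      rw [Function.iterate_succ_apply', ih, next_cycState]
      congr 1
      push_cast; ring

lemma iter_eq_cycState (n r : ℕ) (b : ZMod n → Bool) (q : ComposedState n r) :
    (composedNext n r b)^[2 * r] q = cycState n r b (q.1 + ((2 * r : ℕ) : ZMod n)) := by
  obtain ⟨k, w⟩ := q
  rw [iter_apply]
  refine Prod.ext rfl ?_
  funext i
  show (if h : (i : ℕ) + 2 * r < 2 * r then _ else
      b (k + (((i : ℕ) + 2 * r - 2 * r : ℕ) : ZMod n)))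
    = b (k + ((2 * r : ℕ) : ZMod n) - ((2 * r : ℕ) : ZMod n) + ((i : ℕ) : ZMod n))
  rw [dif_neg (by omega)]
  congr 1
  have : ((i : ℕ) + 2 * r - 2 * r : ℕ) = (i : ℕ) := by omega
  rw [this]; ring

lemma prune_iter (n r : ℕ) (b : ZMod n → Bool) (m : ℕ) :
    (pruneUnreachable n r b)^[m] Set.univ = Set.range ((composedNext n r b)^[m]) := by
  induction m with
  | zero => simp
  | succ m ih =>
      rw [Function.iterate_succ_apply', ih]
      ext q
      constructor
      · rintro ⟨-, p, ⟨p₀, rfl⟩, rfl⟩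
        exact ⟨p₀, Function.iterate_succ_apply' _ _ _⟩
      · rintro ⟨p₀, rfl⟩
        exact ⟨⟨composedNext n r b p₀, (Function.iterate_succ_apply _ _ _).symm⟩,
          (composedNext n r b)^[m] p₀, ⟨p₀, rfl⟩,
          (Function.iterate_succ_apply' _ _ _).symm⟩

lemma final_set (n r : ℕ) (b : ZMod n → Bool) :
    (pruneUnreachable n r b)^[2 * r] Set.univ = Set.range (cycState n r b) := by
  rw [prune_iter]
  ext q
  constructor
  · rintro ⟨p, rfl⟩
    exact ⟨p.1 + ((2 * r : ℕ) : ZMod n), (iter_eq_cycState n r b p).symm⟩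
  · rintro ⟨j, rfl⟩
    refine ⟨cycState n r b (j - ((2 * r : ℕ) : ZMod n)), ?_⟩
    rw [iter_cycState]
    congr 1
    ring

lemma cycState_injective (n r : ℕ) (b : ZMod n → Bool) :
    Function.Injective (cycState n r b) := by
  intro j j' h
  simpa [cycState] using congrArg Prod.fst h

theorem pruning_yields_cycle
    (n r : ℕ) (hn : 1 ≤ n) (b : ZMod n → Bool) :
    ∀ A : Set (ComposedState n r),
      A = (pruneUnreachable n r b)^[2 * r] Set.univ →
        Set.ncard A = n ∧
        (∀ k : ZMod n, ∃! w : Fin (2 * r) → Bool, (k, w) ∈ A) ∧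
        Set.MapsTo (composedNext n r b) A A ∧
        (∀ p ∈ A, ∀ q ∈ A, ∃ t : ℕ, (composedNext n r b)^[t] p = q) := by
  haveI : NeZero n := ⟨by omega⟩
  intro A hA
  rw [hA, final_set]
  refine ⟨?_, ?_, ?_, ?_⟩
  · rw [← Set.image_univ, Set.ncard_image_of_injective _ (cycState_injective n r b),
      Set.ncard_univ, Nat.card_eq_fintype_card, ZMod.card]
  · intro k
    refine ⟨(cycState n r b k).2, ⟨k, rfl⟩, ?_⟩
    rintro w ⟨j, hj⟩
    have h1 : j = k := by simpa [cycState] using congrArg Prod.fst hj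
    rw [← h1]; exact (congrArg Prod.snd hj).symm
  · rintro q ⟨j, rfl⟩
    exact ⟨j + 1, (next_cycState n r b j).symm⟩
  · rintro p ⟨j, rfl⟩ q ⟨j', rfl⟩
    refine ⟨(j' - j).val, ?_⟩
    rw [iter_cycState, ZMod.natCast_rightInverse (j' - j)]
    congr 1
    ring
end
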